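/- (Proposition 6.6 / geometric interpretation.) Let 𝓗 be a finite-dimensional complex inner product space, H : ℝ → (𝓗 →L[ℂ] 𝓗) continuous with each H(t) self-adjoint, and U : ℝ → (𝓗 →L[ℂ] 𝓗) differentiable with U(0) = 1, U(t) unitary, and i·U′(t) = H(t) ∘ U(t). Let {ψ^{(j)}_k : 1 ≤ k ≤ d_j, 1 ≤ j ≤ n} be an orthonormal basis of 𝓗 and E_j := Σ_{k=1}^{d_j} |ψ^{(j)}_k⟩⟨ψ^{(j)}_k|. For each j let Ṽ_j solve i·Ṽ_j′(t) = C_j(t)·Ṽ_j(t), Ṽ_j(0) = 1, with C_j(t)_{p k} := ⟨ψ^{(j)}_p, H(t) ψ^{(j)}_k⟩, and set ψ̃^{(j)}_k(t) := Σ_p Ṽ_j(t)_{p k} · U(t)⁻¹ψ^{(j)}_p. Then Ũ(t) := Σ_{j,k} |ψ̃^{(j)}_k(t)⟩⟨ψ^{(j)}_k| is unitary for every t and is horizontal for the canonical connection: Σ_j E_j ∘ Ũ(t)⁻¹ ∘ Ũ′(t) ∘ E_j = 0 for all t. -/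

import Mathlib

/-- The rank-one operator `|u⟩⟨v| : x ↦ ⟨v, x⟩·u`. -/
noncomputable def ketbra {E : Type*} [NormedAddCommGroup E] [InnerProductSpace ℂ E]
    (u v : E) : E →L[ℂ] E :=
  (innerSL ℂ v).smulRight u

/-!
Write `Ũ(t) = ∑_σ |ψ̃_σ(t)⟩⟨ψ_σ|` with `ψ̃^{(j)}_k(t) = U(t)* (∑_p Ṽ_j(t)_{pk} ψ^{(j)}_p)`.
Since `C_j` is Hermitian, `Ṽ_j* Ṽ_j` is constant, so each `Ṽ_j(t)` is unitary; as `U(t)*` is an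
isometry, `ψ̃(t)` is again orthonormal and `Ũ(t)` is unitary.

The compression `E_j Ũ* Ũ' E_j` is
`∑_{k,k'} ⟨ψ̃^{(j)}_k, (ψ̃^{(j)}_{k'})'⟩ |ψ^{(j)}_k⟩⟨ψ^{(j)}_{k'}|`.
Taking adjoints in `i U' = H U` gives `U U'* = i H`, so `U (ψ̃^{(j)}_{k'})'` has coordinates
`(Ṽ_j' + i C_j Ṽ_j)_{qk'}` along `ψ^{(j)}_q`, and these vanish by the equation for `Ṽ_j`.
-/

open ContinuousLinearMap Finset

section

variable {E : Type*} [NormedAddCommGroup E] [InnerProductSpace ℂ E]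

theorem ketbra_apply (u v x : E) : ketbra u v x = inner ℂ v x • u := rfl

theorem ketbra_comp_ketbra (u v w z : E) :
    ketbra u v ∘L ketbra w z = inner ℂ v w • ketbra u z := by
  ext x
  simp [ketbra_apply, smul_smul, mul_comm]

theorem hasDerivAt_ketbra {f : ℝ → E} {f' : E} {t : ℝ} (v : E) (hf : HasDerivAt f f' t) :
    HasDerivAt (fun s => ketbra (f s) v) (ketbra f' v) t :=
  ((smulRightL ℂ E E (innerSL ℂ v)).restrictScalars ℝ).hasFDerivAt.comp_hasDerivAt t hf

theorem Orthonormal.sum_inner_smul {ι M : Type*} [Fintype ι] [AddCommMonoid M] [Module ℂ M]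
    {v : ι → E} (hv : Orthonormal ℂ v) (f : ι → M) (a : ι) :
    ∑ i, inner ℂ (v a) (v i) • f i = f a := by
  classical
  simp [orthonormal_iff_ite.mp hv]

theorem Orthonormal.sum_inner_smul' {ι M : Type*} [Fintype ι] [AddCommMonoid M] [Module ℂ M]
    {v : ι → E} (hv : Orthonormal ℂ v) (f : ι → M) (a : ι) :
    ∑ i, inner ℂ (v i) (v a) • f i = f a := by
  classical
  simp [orthonormal_iff_ite.mp hv]

theorem Orthonormal.sum_smul_of_conjTranspose_mul_self {m n : Type*} [Fintype m] [DecidableEq n]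
    {v : m → E} (hv : Orthonormal ℂ v) {M : Matrix m n ℂ} (hM : M.conjTranspose * M = 1) :
    Orthonormal ℂ fun k => ∑ p, M p k • v p := by
  rw [orthonormal_iff_ite]
  intro k k'
  have hMkk' := congrFun (congrFun hM k) k'
  simp only [Matrix.mul_apply, Matrix.conjTranspose_apply, RCLike.star_def,
    Matrix.one_apply] at hMkk'
  simp only [sum_inner, inner_smul_left, hv.inner_right_fintype, hMkk']

theorem Orthonormal.sigma_sum_smul {ι : Type*} {κ : ι → Type*} [∀ j, Fintype (κ j)]
    [∀ j, DecidableEq (κ j)] {ψ : (j : ι) → κ j → E}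
    (hψ : Orthonormal ℂ fun x : Σ j, κ j => ψ x.1 x.2) {M : (j : ι) → Matrix (κ j) (κ j) ℂ}
    (hM : ∀ j, (M j).conjTranspose * M j = 1) :
    Orthonormal ℂ fun x : Σ j, κ j => ∑ p, M x.1 p x.2 • ψ x.1 p := by
  refine ⟨fun x => ((hψ.comp _ sigma_mk_injective).sum_smul_of_conjTranspose_mul_self
    (hM x.1)).1 x.2, ?_⟩
  rintro ⟨j, k⟩ ⟨j', k'⟩ hne
  by_cases hj : j = j'
  · subst hj
    exact ((hψ.comp _ sigma_mk_injective).sum_smul_of_conjTranspose_mul_self (hM j)).2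
      fun h => hne (congrArg _ h)
  · have h0 (p q) : inner ℂ (ψ j p) (ψ j' q) = 0 :=
      hψ.2 (i := ⟨j, p⟩) (j := ⟨j', q⟩) fun h => hj (congrArg Sigma.fst h)
    simp [sum_inner, inner_sum, inner_smul_left, inner_smul_right, h0]

theorem OrthonormalBasis.sum_ketbra_self {ι : Type*} [Fintype ι] (b : OrthonormalBasis ι ℂ E) :
    ∑ i, ketbra (b i) (b i) = 1 := by
  ext x
  simpa [ketbra_apply] using b.sum_repr' x

variable [CompleteSpace E]

theorem adjoint_ketbra (u v : E) : adjoint (ketbra u v) = ketbra v u := by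
  refine ((eq_adjoint_iff (ketbra v u) (ketbra u v)).mpr fun x y => ?_).symm
  simp [ketbra_apply, inner_smul_left, inner_smul_right, mul_comm]

theorem adjoint_sum_ketbra {ι : Type*} [Fintype ι] (u v : ι → E) :
    adjoint (∑ i, ketbra (u i) (v i)) = ∑ i, ketbra (v i) (u i) := by
  rw [← star_eq_adjoint, star_sum]
  simp only [star_eq_adjoint, adjoint_ketbra]

theorem OrthonormalBasis.sum_ketbra_mem_unitary {ι : Type*} [Fintype ι] [FiniteDimensional ℂ E]
    (b : OrthonormalBasis ι ℂ E) {φ : ι → E} (hφ : Orthonormal ℂ φ) :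
    ∑ i, ketbra (φ i) (b i) ∈ unitary (E →L[ℂ] E) := by
  have hleft : adjoint (∑ i, ketbra (φ i) (b i)) ∘L ∑ i, ketbra (φ i) (b i) = 1 := by
    simp only [adjoint_sum_ketbra, finsetSum_comp, comp_finsetSum, ketbra_comp_ketbra]
    rw [sum_congr rfl fun i _ => hφ.sum_inner_smul' (fun i' => ketbra (b i') (b i)) i]
    exact b.sum_ketbra_self
  have : IsDedekindFiniteMonoid (E →L[ℂ] E) :=
    .of_injective (toLinearMapRingHom : (E →L[ℂ] E) →+* E →ₗ[ℂ] E) coe_injective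
  exact Unitary.mem_iff.mpr ⟨hleft, mul_eq_one_comm.mp hleft⟩

theorem inner_adjoint_apply_adjoint_apply {A : E →L[ℂ] E} (hA : A ∘L adjoint A = 1) (x y : E) :
    inner ℂ (adjoint A x) (adjoint A y) = inner ℂ x y := by
  rw [adjoint_inner_left, ← comp_apply, hA, one_apply_eq_self]

theorem Orthonormal.adjoint_apply {ι : Type*} {A : E →L[ℂ] E} (hA : A ∘L adjoint A = 1)
    {v : ι → E} (hv : Orthonormal ℂ v) : Orthonormal ℂ fun i => adjoint A (v i) := by
  classical
  rw [orthonormal_iff_ite] at hv ⊢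
  simpa only [inner_adjoint_apply_adjoint_apply hA] using hv

theorem sum_ketbra_comp_adjoint_comp_comp_sum_ketbra_eq_zero {ι : Type*} {κ : ι → Type*}
    [Fintype ι] [∀ j, Fintype (κ j)] {ψ : (j : ι) → κ j → E}
    (hψ : Orthonormal ℂ fun x : Σ j, κ j => ψ x.1 x.2) (φ φ' : (j : ι) → κ j → E) (j : ι)
    (h : ∀ k k', inner ℂ (φ j k) (φ' j k') = 0) :
    (∑ k, ketbra (ψ j k) (ψ j k)) ∘L adjoint (∑ x : Σ j, κ j, ketbra (φ x.1 x.2) (ψ x.1 x.2)) ∘L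
      (∑ x : Σ j, κ j, ketbra (φ' x.1 x.2) (ψ x.1 x.2)) ∘L (∑ k, ketbra (ψ j k) (ψ j k)) = 0 := by
  have hleft : (∑ k, ketbra (ψ j k) (ψ j k)) ∘L
      adjoint (∑ x : Σ j, κ j, ketbra (φ x.1 x.2) (ψ x.1 x.2)) = ∑ k, ketbra (ψ j k) (φ j k) := by
    simp only [adjoint_sum_ketbra, finsetSum_comp, comp_finsetSum, ketbra_comp_ketbra]
    rw [sum_comm]
    exact sum_congr rfl fun k _ =>
      hψ.sum_inner_smul (fun x => ketbra (ψ j k) (φ x.1 x.2)) ⟨j, k⟩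
  have hright : (∑ x : Σ j, κ j, ketbra (φ' x.1 x.2) (ψ x.1 x.2)) ∘L
      (∑ k, ketbra (ψ j k) (ψ j k)) = ∑ k, ketbra (φ' j k) (ψ j k) := by
    simp only [finsetSum_comp, comp_finsetSum, ketbra_comp_ketbra]
    exact sum_congr rfl fun k _ =>
      hψ.sum_inner_smul' (fun x => ketbra (φ' x.1 x.2) (ψ j k)) ⟨j, k⟩
  rw [← comp_assoc, hleft, hright]
  simp [finsetSum_comp, comp_finsetSum, ketbra_comp_ketbra, h]

theorem hasDerivAt_adjoint_apply {A : ℝ → E →L[ℂ] E} {A' : E →L[ℂ] E} {t : ℝ}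
    (hA : HasDerivAt A A' t) (v : E) :
    HasDerivAt (fun s => adjoint (A s) v) (adjoint A' v) t := by
  simp only [← star_eq_adjoint]
  exact ((apply ℂ E v).restrictScalars ℝ).hasFDerivAt.comp_hasDerivAt t hA.star

theorem comp_adjoint_eq_smul_of_schrodinger {U U' H : E →L[ℂ] E} (hU : U ∘L adjoint U = 1)
    (hSch : Complex.I • U' = H ∘L U) (hH : IsSelfAdjoint H) :
    U ∘L adjoint U' = Complex.I • H := by
  have hadj : adjoint U' = Complex.I • (adjoint U ∘L H) := by
    have h := congrArg adjoint hSch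
    rw [← star_eq_adjoint, star_smul, star_eq_adjoint, adjoint_comp, ← star_eq_adjoint H,
      hH.star_eq, Complex.star_def, Complex.conj_I] at h
    rw [← h, smul_smul, mul_neg, Complex.I_mul_I, neg_neg, one_smul]
  rw [hadj, comp_smul, ← comp_assoc, hU]
  rfl

theorem IsSelfAdjoint.isHermitian_of_inner {m : Type*} {H : E →L[ℂ] E} (hH : IsSelfAdjoint H)
    (v : m → E) {C : Matrix m m ℂ} (hC : ∀ p k, C p k = inner ℂ (v p) (H (v k))) :
    C.IsHermitian := by
  ext p k
  rw [Matrix.conjTranspose_apply, hC, hC, RCLike.star_def, inner_conj_symm,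
    ← hH.adjoint_eq, adjoint_inner_left, hH.adjoint_eq]

theorem inner_movingFrame_deriv_eq_zero {m : Type*} [Fintype m] {U U' H : E →L[ℂ] E}
    (hU : U ∘L adjoint U = 1) (hUH : U ∘L adjoint U' = Complex.I • H)
    {v : m → E} (hv : Orthonormal ℂ v) {C V V' : Matrix m m ℂ}
    (hC : ∀ p k, C p k = inner ℂ (v p) (H (v k))) (hode : Complex.I • V' = C * V) (k k' : m) :
    inner ℂ (∑ q, V q k' • adjoint U (v q))
      (∑ p, (V p k • adjoint U' (v p) + V' p k • adjoint U (v p))) = 0 := by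
  classical
  have hcoord (q : m) :
      inner ℂ (v q) (U (∑ p, (V p k • adjoint U' (v p) + V' p k • adjoint U (v p)))) = 0 := by
    have hqk := congrFun (congrFun hode q) k
    simp only [Matrix.smul_apply, Matrix.mul_apply, smul_eq_mul, hC] at hqk
    simp only [map_sum, map_add, map_smul, ← comp_apply, hU, hUH, one_apply_eq_self, smul_apply,
      inner_sum, inner_add_right, inner_smul_right, sum_add_distrib, orthonormal_iff_ite.mp hv,
      mul_ite, mul_one, mul_zero, sum_ite_eq, mem_univ, if_true]
    rw [show ∑ p, V p k * (Complex.I * inner ℂ (v q) (H (v p)))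
        = Complex.I * ∑ p, inner ℂ (v q) (H (v p)) * V p k by
      rw [mul_sum]; exact sum_congr rfl fun p _ => by ring, ← hqk]
    linear_combination V' q k * Complex.I_sq
  simp only [sum_inner, inner_smul_left, adjoint_inner_left, hcoord, mul_zero, sum_const_zero]

end

theorem Matrix.conjTranspose_mul_self_eq_of_schrodinger {m : Type*} [Fintype m]
    {C V V' : ℝ → Matrix m m ℂ} (hC : ∀ t, (C t).IsHermitian)
    (hV : ∀ t p k, HasDerivAt (fun s => V s p k) (V' t p k) t)
    (hode : ∀ t, Complex.I • V' t = C t * V t) (s t : ℝ) :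
    (V s).conjTranspose * V s = (V t).conjTranspose * V t := by
  have hzero (t : ℝ) : (V' t).conjTranspose * V t + (V t).conjTranspose * V' t = 0 := by
    have hV' : V' t = -Complex.I • (C t * V t) := by
      rw [← hode t, smul_smul, neg_mul, Complex.I_mul_I, neg_neg, one_smul]
    rw [hV', conjTranspose_smul, conjTranspose_mul, (hC t).eq, smul_mul, Matrix.mul_smul,
      Matrix.mul_assoc, star_neg, Complex.star_def, Complex.conj_I,
      neg_smul, neg_add_cancel]
  ext p k
  have hderiv (t : ℝ) : HasDerivAt (fun s => ((V s).conjTranspose * V s) p k) 0 t := by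
    have h := HasDerivAt.fun_sum (u := univ) fun q _ => (hV t q p).star.fun_mul (hV t q k)
    have h0 := congrFun (congrFun (hzero t) p) k
    rw [Matrix.zero_apply] at h0
    rw [← h0]
    simpa only [Matrix.mul_apply, Matrix.add_apply, Matrix.conjTranspose_apply, sum_add_distrib]
      using h
  exact is_const_of_deriv_eq_zero (fun t => (hderiv t).differentiableAt)
    (fun t => (hderiv t).deriv) s t

open ContinuousLinearMap in
theorem lift_is_horizontal_general
    {𝓗 : Type*} [NormedAddCommGroup 𝓗] [InnerProductSpace ℂ 𝓗] [FiniteDimensional ℂ 𝓗]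
    (Ham : ℝ → 𝓗 →L[ℂ] 𝓗)
    (hHsa : ∀ t, IsSelfAdjoint (Ham t))
    (U U' : ℝ → 𝓗 →L[ℂ] 𝓗)
    (hUuni : ∀ t, adjoint (U t) ∘L U t = 1 ∧ U t ∘L adjoint (U t) = 1)
    (hUderiv : ∀ t, HasDerivAt U (U' t) t)
    (hSch : ∀ t, Complex.I • U' t = Ham t ∘L U t)
    (n : ℕ) (d : Fin n → ℕ) (ψ : (j : Fin n) → Fin (d j) → 𝓗)
    (hon : Orthonormal ℂ (fun x : Σ j : Fin n, Fin (d j) => ψ x.1 x.2))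
    (hbasis : Submodule.span ℂ (Set.range fun x : Σ j : Fin n, Fin (d j) => ψ x.1 x.2) = ⊤)
    (E : Fin n → 𝓗 →L[ℂ] 𝓗)
    (hE : ∀ j, E j = ∑ k, ketbra (ψ j k) (ψ j k))
    (C : (j : Fin n) → ℝ → Matrix (Fin (d j)) (Fin (d j)) ℂ)
    (hC : ∀ j t p k, C j t p k = (inner ℂ (ψ j p) (Ham t (ψ j k)) : ℂ))
    (V V' : (j : Fin n) → ℝ → Matrix (Fin (d j)) (Fin (d j)) ℂ)
    (hV0 : ∀ j, V j 0 = 1)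
    (hVderiv : ∀ j t p k, HasDerivAt (fun s => V j s p k) (V' j t p k) t)
    (hVode : ∀ j t, Complex.I • V' j t = C j t * V j t)
    (ψtil : (j : Fin n) → Fin (d j) → ℝ → 𝓗)
    (hψtil : ∀ j k t, ψtil j k t = ∑ p, V j t p k • (adjoint (U t)) (ψ j p))
    (Util : ℝ → 𝓗 →L[ℂ] 𝓗)
    (hUtil : ∀ t, Util t = ∑ j, ∑ k, ketbra (ψtil j k t) (ψ j k)) :
    ∀ t, (adjoint (Util t) ∘L Util t = 1 ∧ Util t ∘L adjoint (Util t) = 1) ∧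
      ∃ D : 𝓗 →L[ℂ] 𝓗, HasDerivAt Util D t ∧
        ∑ j, E j ∘L adjoint (Util t) ∘L D ∘L E j = 0 := by
  intro t
  have hV (j : Fin n) : (V j t).conjTranspose * V j t = 1 := by
    rw [Matrix.conjTranspose_mul_self_eq_of_schrodinger
      (fun s => (hHsa s).isHermitian_of_inner (ψ j) (hC j s)) (hVderiv j) (hVode j) t 0, hV0 j,
      Matrix.conjTranspose_one, Matrix.one_mul]
  have hψtil_on : Orthonormal ℂ fun x : Σ j, Fin (d j) => ψtil x.1 x.2 t := by
    convert (hon.sigma_sum_smul hV).adjoint_apply (hUuni t).2 using 2 with x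
    simp [hψtil, map_sum, map_smul]
  have hUtil_sigma : Util = fun s => ∑ x : Σ j, Fin (d j), ketbra (ψtil x.1 x.2 s) (ψ x.1 x.2) :=
    funext fun s => by rw [hUtil, Fintype.sum_sigma]
  set ψtil' : (j : Fin n) → Fin (d j) → 𝓗 := fun j k =>
    ∑ p, (V j t p k • adjoint (U' t) (ψ j p) + V' j t p k • adjoint (U t) (ψ j p))
  have hψtil_deriv (x : Σ j, Fin (d j)) : HasDerivAt (ψtil x.1 x.2) (ψtil' x.1 x.2) t := by
    rw [funext (hψtil x.1 x.2)]
    exact HasDerivAt.fun_sum fun p _ =>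
      (hVderiv x.1 t p x.2).smul (hasDerivAt_adjoint_apply (hUderiv t) (ψ x.1 p))
  have hunitary := (OrthonormalBasis.mk hon hbasis.ge).sum_ketbra_mem_unitary hψtil_on
  rw [OrthonormalBasis.coe_mk] at hunitary
  subst hUtil_sigma
  refine ⟨Unitary.mem_iff.mp hunitary,
    ∑ x : Σ j, Fin (d j), ketbra (ψtil' x.1 x.2) (ψ x.1 x.2),
    HasDerivAt.fun_sum fun x _ => hasDerivAt_ketbra _ (hψtil_deriv x), ?_⟩
  simp only [hE]
  refine sum_eq_zero fun j _ => sum_ketbra_comp_adjoint_comp_comp_sum_ketbra_eq_zero hon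
    (fun j k => ψtil j k t) ψtil' j fun k k' => ?_
  rw [hψtil]
  exact inner_movingFrame_deriv_eq_zero (hUuni t).2
    (comp_adjoint_eq_smul_of_schrodinger (hUuni t).2 (hSch t) (hHsa t))
    (hon.comp _ sigma_mk_injective) (hC j t) (hVode j t) k' k

open ContinuousLinearMap in
/-- Proposition 6.6 (geometric interpretation): the lift
`Ũ(t) = Σ_{j,k} |ψ̃^{(j)}_k(t)⟩⟨ψ^{(j)}_k|` of the observable evolution is unitary and
horizontal for the canonical non-Abelian quantum connection associated with the
projections `E_j = Σ_k |ψ^{(j)}_k⟩⟨ψ^{(j)}_k|`. -/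
theorem lift_is_horizontal
    {𝓗 : Type*} [NormedAddCommGroup 𝓗] [InnerProductSpace ℂ 𝓗] [FiniteDimensional ℂ 𝓗]
    (Ham : ℝ → 𝓗 →L[ℂ] 𝓗) (hHcont : Continuous Ham)
    (hHsa : ∀ t, IsSelfAdjoint (Ham t))
    (U U' : ℝ → 𝓗 →L[ℂ] 𝓗)
    (hU0 : U 0 = 1)
    (hUuni : ∀ t, adjoint (U t) ∘L U t = 1 ∧ U t ∘L adjoint (U t) = 1)
    (hUderiv : ∀ t, HasDerivAt U (U' t) t)
    (hSch : ∀ t, Complex.I • U' t = Ham t ∘L U t)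
    (n : ℕ) (d : Fin n → ℕ) (ψ : (j : Fin n) → Fin (d j) → 𝓗)
    (hon : Orthonormal ℂ (fun x : Σ j : Fin n, Fin (d j) => ψ x.1 x.2))
    (hbasis : Submodule.span ℂ (Set.range fun x : Σ j : Fin n, Fin (d j) => ψ x.1 x.2) = ⊤)
    (E : Fin n → 𝓗 →L[ℂ] 𝓗)
    (hE : ∀ j, E j = ∑ k, ketbra (ψ j k) (ψ j k))
    (C : (j : Fin n) → ℝ → Matrix (Fin (d j)) (Fin (d j)) ℂ)
    (hC : ∀ j t p k, C j t p k = (inner ℂ (ψ j p) (Ham t (ψ j k)) : ℂ))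
    (V V' : (j : Fin n) → ℝ → Matrix (Fin (d j)) (Fin (d j)) ℂ)
    (hV0 : ∀ j, V j 0 = 1)
    (hVderiv : ∀ j t p k, HasDerivAt (fun s => V j s p k) (V' j t p k) t)
    (hVode : ∀ j t, Complex.I • V' j t = C j t * V j t)
    (ψtil : (j : Fin n) → Fin (d j) → ℝ → 𝓗)
    (hψtil : ∀ j k t, ψtil j k t = ∑ p, V j t p k • (adjoint (U t)) (ψ j p))
    (Util : ℝ → 𝓗 →L[ℂ] 𝓗)
    (hUtil : ∀ t, Util t = ∑ j, ∑ k, ketbra (ψtil j k t) (ψ j k)) :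
    ∀ t, (adjoint (Util t) ∘L Util t = 1 ∧ Util t ∘L adjoint (Util t) = 1) ∧
      ∃ D : 𝓗 →L[ℂ] 𝓗, HasDerivAt Util D t ∧
        ∑ j, E j ∘L adjoint (Util t) ∘L D ∘L E j = 0 :=
  lift_is_horizontal_general Ham hHsa U U' hUuni hUderiv hSch n d ψ hon hbasis E hE C hC V V' hV0
    hVderiv hVode ψtil hψtil Util hUtil
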